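/- arXiv:1808.05608 — 2 statements merged into one kernel-verified Lean document; each statement's English description precedes it below -/
import Mathlib

section
/- For every complex s with nonzero real part, real numbers x₀ ≤ x, and complex α with Re(α) > 0, the Riemann–Liouville fractional integral of order α of the function t ↦ e^{st} from x₀ to x equals (e^{sx}/s^α)·P(α, s(x − x₀)), where P(a,z) = (1/Γ(a))·∫₀^z t^{a−1} e^{−t} dt is the regularized lower incomplete gamma function. -/
/-! The substitution `u = x - t` turns the fractional integral into
`e^{sx} ∫₀^{x-x₀} u^{α-1} e^{-su} du`. Rescaling the segment `[0, s(x - x₀)]` of the incomplete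
gamma integral by the nonnegative real factor `x - x₀` turns it into `s^α` times the same integral,
because `(r s)^c = r^c s^c` for real `r ≥ 0` even on the principal branch. -/

/-- The regularized lower incomplete gamma function `P(a, z)`, defined by integrating
`t^(a-1) e^(-t)` along the straight segment from `0` to `z` (principal branch powers),
divided by `Γ(a)`. -/
noncomputable def regLowerIncGamma (a z : ℂ) : ℂ :=
  (∫ s in (0:ℝ)..1, ((s : ℂ) * z) ^ (a - 1) * Complex.exp (-((s : ℂ) * z)) * z) /
    Complex.Gamma a

open Complex intervalIntegral

lemma ofReal_mul_cpow_of_nonneg {r : ℝ} (hr : 0 ≤ r) (z c : ℂ) :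
    ((r : ℂ) * z) ^ c = (r : ℂ) ^ c * z ^ c := by
  rcases eq_or_ne c 0 with rfl | hc
  · simp
  rcases hr.eq_or_lt with rfl | hr
  · simp [zero_cpow hc]
  rcases eq_or_ne z 0 with rfl | hz
  · simp [zero_cpow hc]
  have hr' : (r : ℂ) ≠ 0 := ofReal_ne_zero.mpr hr.ne'
  rw [cpow_def_of_ne_zero (mul_ne_zero hr' hz), log_ofReal_mul hr hz, ofReal_log hr.le,
    add_mul, exp_add, ← cpow_def_of_ne_zero hr', ← cpow_def_of_ne_zero hz]

lemma integral_sub_cpow_mul_exp (s c : ℂ) (x₀ x : ℝ) :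
    ∫ t in x₀..x, ((x : ℂ) - t) ^ c * exp (s * t) =
      exp (s * x) * ∫ u in (0 : ℝ)..x - x₀, (u : ℂ) ^ c * exp (-(s * u)) := by
  have reflect := integral_comp_sub_left
    (fun u : ℝ => exp (s * x) * ((u : ℂ) ^ c * exp (-(s * u)))) (a := x₀) (b := x) x
  rw [sub_self] at reflect
  rw [← integral_const_mul, ← reflect]
  refine integral_congr fun t _ => ?_
  rw [mul_left_comm, ← exp_add]
  push_cast
  ring_nf

lemma regLowerIncGamma_mul_ofReal {s : ℂ} (hs : s ≠ 0) (a : ℂ) {d : ℝ} (hd : 0 ≤ d) :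
    regLowerIncGamma a (s * d) =
      s ^ a * (∫ u in (0 : ℝ)..d, (u : ℂ) ^ (a - 1) * exp (-(s * u))) / Gamma a := by
  have hpow : s ^ (a - 1) * s = s ^ a := by rw [cpow_sub _ _ hs, cpow_one, div_mul_cancel₀ _ hs]
  have rescale := smul_integral_comp_mul_left
    (fun u : ℝ => (u : ℂ) ^ (a - 1) * exp (-(s * u))) (a := 0) (b := 1) d
  rw [mul_zero, mul_one] at rescale
  rw [regLowerIncGamma, ← rescale, real_smul, ← integral_const_mul, ← integral_const_mul]
  congr 1
  refine integral_congr fun v hv01 => ?_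
  have hv : 0 ≤ v := by rw [Set.uIcc_of_le zero_le_one] at hv01; exact hv01.1
  rw [show (v : ℂ) * (s * d) = ((d * v : ℝ) : ℂ) * s by push_cast; ring,
    ofReal_mul_cpow_of_nonneg (mul_nonneg hd hv), ← hpow]
  push_cast
  ring_nf

theorem frac_int_exp_general (s : ℂ) (hs : s.re ≠ 0) (x₀ x : ℝ) (hx : x₀ ≤ x)
    (α : ℂ) :
    (1 / Complex.Gamma α) *
        ∫ t in x₀..x, ((x : ℂ) - (t : ℂ)) ^ (α - 1) * Complex.exp (s * t) =
      Complex.exp (s * x) / s ^ α * regLowerIncGamma α (s * ((x : ℂ) - (x₀ : ℂ))) := by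
  have hs0 : s ≠ 0 := by rintro rfl; exact hs zero_re
  rw [integral_sub_cpow_mul_exp, ← ofReal_sub,
    regLowerIncGamma_mul_ofReal hs0 α (sub_nonneg.mpr hx)]
  have hsα : s ^ α ≠ 0 := by simp [cpow_eq_zero_iff, hs0]
  field_simp

theorem frac_int_exp (s : ℂ) (hs : s.re ≠ 0) (x₀ x : ℝ) (hx : x₀ ≤ x)
    (α : ℂ) (hα : 0 < α.re) :
    (1 / Complex.Gamma α) *
        ∫ t in x₀..x, ((x : ℂ) - (t : ℂ)) ^ (α - 1) * Complex.exp (s * t) =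
      Complex.exp (s * x) / s ^ α * regLowerIncGamma α (s * ((x : ℂ) - (x₀ : ℂ))) :=
  frac_int_exp_general s hs x₀ x hx α
end

section
/- For all real ν > 0 and natural n ≥ 1, the quantity (1/π)·Re ∫₀^π (ix)^n e^{iνx} dx − (1/π)·Im ∫₀^∞ (iπ − x)^n e^{(iπ−x)ν} dx equals zero. -/
/-!
Both integrals are integrals of `z ↦ zⁿ e^{νz}`: along the segment from `0` to `iπ`, and along
the horizontal ray from `iπ` towards `iπ - ∞`. Repeated integration by parts gives an explicit
antiderivative `F`, which decays along the ray. Hence the first integral is `-i (F(iπ) - F(0))`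
and the second is `F(iπ)`. Since `F(0) = (-1)ⁿ n! / ν^(n+1)` is real, the real part of the first
equals the imaginary part of the second.
-/

open MeasureTheory Set Filter Topology Asymptotics Complex

noncomputable def powMulExpAntideriv (c : ℂ) : ℕ → ℂ → ℂ
  | 0, z => exp (z * c) / c
  | k + 1, z => z ^ (k + 1) * exp (z * c) / c - (k + 1) / c * powMulExpAntideriv c k z

variable {c : ℂ}

namespace powMulExpAntideriv

theorem hasDerivAt (hc : c ≠ 0) (k : ℕ) (z : ℂ) :
    HasDerivAt (powMulExpAntideriv c k) (z ^ k * exp (z * c)) z := by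
  have hexp : HasDerivAt (fun z => exp (z * c)) (exp (z * c) * c) z :=
    ((hasDerivAt_id z).mul_const c).cexp.congr_deriv (by simp)
  induction k with
  | zero => simpa [powMulExpAntideriv, hc] using hexp.div_const c
  | succ k ih =>
    refine ((((hasDerivAt_pow (k + 1) z).mul hexp).div_const c).sub
      (ih.const_mul ((k + 1) / c))).congr_deriv ?_
    push_cast
    field_simp
    ring

theorem apply_zero (c : ℂ) (k : ℕ) :
    powMulExpAntideriv c k 0 = (-1) ^ k * k.factorial / c ^ (k + 1) := by
  induction k with
  | zero => simp [powMulExpAntideriv]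
  | succ k ih =>
    rw [powMulExpAntideriv, ih, Nat.factorial_succ]
    push_cast
    ring

end powMulExpAntideriv

theorem isBigO_sub_ofReal_atTop (a : ℂ) : (fun x : ℝ => a - x) =O[atTop] fun x => x := by
  refine IsBigO.of_bound 2 ?_
  filter_upwards [eventually_ge_atTop ‖a‖] with x hx
  have hx0 : 0 ≤ x := (norm_nonneg a).trans hx
  calc ‖a - x‖ ≤ ‖a‖ + ‖(x : ℂ)‖ := norm_sub_le _ _
    _ ≤ 2 * ‖x‖ := by simp only [norm_real, Real.norm_eq_abs, abs_of_nonneg hx0]; linarith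

theorem isBigO_exp_sub_ofReal_mul (a : ℂ) :
    (fun x : ℝ => exp ((a - x) * c)) =O[atTop] fun x => Real.exp (-c.re * x) := by
  refine IsBigO.of_bound (Real.exp (a * c).re) (Eventually.of_forall fun x => ?_)
  rw [norm_exp, Real.norm_of_nonneg (Real.exp_pos _).le, ← Real.exp_add]
  apply le_of_eq
  simp
  ring

theorem isBigO_pow_mul_exp_sub_ofReal_mul (a : ℂ) (hc : 0 < c.re) (k : ℕ) :
    (fun x : ℝ => (a - x) ^ k * exp ((a - x) * c)) =O[atTop]
      fun x => Real.exp (-(c.re / 2) * x) := by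
  have hdecay : (fun x : ℝ => x ^ k * Real.exp (-c.re * x)) =O[atTop]
      fun x => Real.exp (-(c.re / 2) * x) := by
    refine ((isLittleO_pow_exp_pos_mul_atTop k (half_pos hc)).mul_isBigO
      (isBigO_refl (fun x => Real.exp (-c.re * x)) atTop)).isBigO.congr_right fun x => ?_
    rw [← Real.exp_add]
    ring_nf
  exact (((isBigO_sub_ofReal_atTop a).pow k).mul (isBigO_exp_sub_ofReal_mul a)).trans hdecay

theorem tendsto_pow_mul_exp_sub_ofReal_mul (a : ℂ) (hc : 0 < c.re) (k : ℕ) :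
    Tendsto (fun x : ℝ => (a - x) ^ k * exp ((a - x) * c)) atTop (𝓝 0) :=
  (isBigO_pow_mul_exp_sub_ofReal_mul a hc k).trans_tendsto <|
    Real.tendsto_exp_atBot.comp <| tendsto_id.const_mul_atTop_of_neg (by linarith)

theorem integrableOn_pow_mul_exp_sub_ofReal_mul (a : ℂ) (hc : 0 < c.re) (k : ℕ) (s : ℝ) :
    IntegrableOn (fun x : ℝ => (a - x) ^ k * exp ((a - x) * c)) (Ioi s) :=
  integrableOn_Ici_iff_integrableOn_Ioi (by finiteness) |>.mp <|
    ((Continuous.continuousOn (by fun_prop)).locallyIntegrableOn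
      measurableSet_Ici).integrableOn_of_isBigO_atTop (isBigO_pow_mul_exp_sub_ofReal_mul a hc k)
      ⟨Ioi 0, Ioi_mem_atTop 0, exp_neg_integrableOn_Ioi 0 (half_pos hc)⟩

theorem powMulExpAntideriv.tendsto_sub_ofReal_atTop (a : ℂ) (hc : 0 < c.re) (k : ℕ) :
    Tendsto (fun x : ℝ => powMulExpAntideriv c k (a - x)) atTop (𝓝 0) := by
  induction k with
  | zero =>
    simpa [powMulExpAntideriv] using (tendsto_pow_mul_exp_sub_ofReal_mul a hc 0).div_const c
  | succ k ih =>
    simpa [powMulExpAntideriv] using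
      ((tendsto_pow_mul_exp_sub_ofReal_mul a hc (k + 1)).div_const c).sub
        (ih.const_mul ((k + 1) / c))

theorem integral_Ioi_pow_mul_exp_sub_ofReal_mul (a : ℂ) (hc : 0 < c.re) (k : ℕ) :
    ∫ x in Ioi (0 : ℝ), (a - x) ^ k * exp ((a - x) * c) = powMulExpAntideriv c k a := by
  have hc0 : c ≠ 0 := fun h => by simp [h] at hc
  have hderiv (x : ℝ) : HasDerivAt (fun y : ℝ => powMulExpAntideriv c k (a - y))
      (-((a - x) ^ k * exp ((a - x) * c))) x := by
    simpa using ((powMulExpAntideriv.hasDerivAt hc0 k _).comp (x : ℂ)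
      ((hasDerivAt_id (x : ℂ)).const_sub a)).comp_ofReal
  have h := integral_Ioi_of_hasDerivAt_of_tendsto (hderiv 0).continuousAt.continuousWithinAt
    (fun x _ => hderiv x) (integrableOn_pow_mul_exp_sub_ofReal_mul a hc k 0).neg
    (powMulExpAntideriv.tendsto_sub_ofReal_atTop a hc k)
  simpa [integral_neg] using h

theorem intervalIntegral_pow_mul_exp_mul_ofReal (hc : c ≠ 0) {u : ℂ} (hu : u ≠ 0) (k : ℕ)
    (s t : ℝ) :
    ∫ x in s..t, (u * x) ^ k * exp ((u * x) * c) =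
      (powMulExpAntideriv c k (u * t) - powMulExpAntideriv c k (u * s)) / u := by
  have hderiv (x : ℝ) : HasDerivAt (fun y : ℝ => powMulExpAntideriv c k (u * y))
      (u * ((u * x) ^ k * exp ((u * x) * c))) x := by
    simpa [mul_comm] using ((powMulExpAntideriv.hasDerivAt hc k _).comp (x : ℂ)
      ((hasDerivAt_id (x : ℂ)).const_mul u)).comp_ofReal
  rw [← intervalIntegral.integral_eq_sub_of_hasDerivAt (fun x _ => hderiv x)
    (Continuous.intervalIntegrable (by fun_prop) s t), intervalIntegral.integral_const_mul,
    mul_div_cancel_left₀ _ hu]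

theorem nth_deriv_bessel_at_zero_general (n : ℕ) (ν : ℝ) (hν : 0 < ν) :
    (1 / Real.pi) *
        (∫ x in (0:ℝ)..Real.pi,
          (Complex.I * (x : ℂ)) ^ n * Complex.exp (Complex.I * ν * x)).re -
      (1 / Real.pi) *
        (∫ x in Set.Ioi (0:ℝ),
          (Complex.I * Real.pi - (x : ℂ)) ^ n *
            Complex.exp ((Complex.I * Real.pi - (x : ℂ)) * ν)).im = 0 := by
  obtain ⟨r, hr⟩ : ∃ r : ℝ, powMulExpAntideriv ν n 0 = r :=
    ⟨(-1) ^ n * n.factorial / ν ^ (n + 1), by rw [powMulExpAntideriv.apply_zero]; push_cast; rfl⟩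
  simp only [mul_right_comm I (ν : ℂ)]
  rw [intervalIntegral_pow_mul_exp_mul_ofReal (ofReal_ne_zero.mpr hν.ne') I_ne_zero,
    integral_Ioi_pow_mul_exp_sub_ofReal_mul _ (by simpa using hν)]
  simp [div_I, hr]

theorem nth_deriv_bessel_at_zero (n : ℕ) (hn : 1 ≤ n) (ν : ℝ) (hν : 0 < ν) :
    (1 / Real.pi) *
        (∫ x in (0:ℝ)..Real.pi,
          (Complex.I * (x : ℂ)) ^ n * Complex.exp (Complex.I * ν * x)).re -
      (1 / Real.pi) *
        (∫ x in Set.Ioi (0:ℝ),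
          (Complex.I * Real.pi - (x : ℂ)) ^ n *
            Complex.exp ((Complex.I * Real.pi - (x : ℂ)) * ν)).im = 0 :=
  nth_deriv_bessel_at_zero_general n ν hν
end
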